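/- For every k ≥ 0: Σ_{n=0}^{k} v^{n(n+3)/2} · {k+n}_{2n}/{n}! = v^{2k(k+1)}, where {i} = v^i − v^{−i}, {a}_{2n} = {a}{a−1}⋯{a−2n+1}, and {n}! = {n}{n−1}⋯{1}. (Note v^{n(n+3)/2} makes sense since n(n+3) is even.) -/
import Mathlib


/-- `v`, an indeterminate, as an element of the field `ℚ(v)` of rational functions. -/
noncomputable def vv : RatFunc ℚ := RatFunc.X

/-- The balanced `q`-integer `{m} = v^m - v^{-m}`. -/
noncomputable def bk (m : ℤ) : RatFunc ℚ := vv ^ m - vv ^ (-m)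

/-- The falling product `{a}_i = {a}{a-1}⋯{a-i+1}`. -/
noncomputable def bkp (a : ℤ) (i : ℕ) : RatFunc ℚ := ∏ j ∈ Finset.range i, bk (a - j)

/-- The balanced factorial `{n}! = {n}{n-1}⋯{1}`. -/
noncomputable def bfact (n : ℕ) : RatFunc ℚ := bkp n n

/-- The balanced binomial coefficient `[a choose b] = {a}_b / {b}!`. -/
noncomputable def bbinom (a : ℤ) (b : ℕ) : RatFunc ℚ := bkp a b / bfact b

/-- Chebyshev-type polynomials `V_0 = 1`, `V_1 = x`, `V_n = x V_{n-1} - V_{n-2}`. -/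
noncomputable def chebV : ℕ → Polynomial (RatFunc ℚ)
  | 0 => 1
  | 1 => Polynomial.X
  | (n + 2) => Polynomial.X * chebV (n + 1) - chebV n

/-- `P_n = ∏_{i=0}^{n-1} (x - v^{2i+1} - v^{-2i-1})`. -/
noncomputable def PP (n : ℕ) : Polynomial (RatFunc ℚ) :=
  ∏ i ∈ Finset.range n,
    (Polynomial.X - Polynomial.C (vv ^ (2 * i + 1) + vv ^ (-(2 * (i : ℤ) + 1))))

lemma vv_ne : (vv : RatFunc ℚ) ≠ 0 := RatFunc.X_ne_zero

lemma vv_pow_ne_one (j : ℕ) : (vv : RatFunc ℚ) ^ (j + 1) ≠ 1 := by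
  intro h
  have h2 : (algebraMap (Polynomial ℚ) (RatFunc ℚ)) (Polynomial.X ^ (j+1)) =
      (algebraMap (Polynomial ℚ) (RatFunc ℚ)) 1 := by
    simpa [vv, map_pow, RatFunc.algebraMap_X] using h
  have h3 := RatFunc.algebraMap_injective ℚ h2
  have := congrArg Polynomial.natDegree h3
  simp at this

lemma bk_nat (j : ℕ) : bk (j : ℤ) = vv ^ j - (vv ^ j)⁻¹ := by
  simp [bk, ← zpow_natCast, ← zpow_neg]

lemma bk_nat_ne (j : ℕ) : bk ((j + 1 : ℕ) : ℤ) ≠ 0 := by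
  rw [bk_nat]
  intro h
  have hx : (vv : RatFunc ℚ) ^ (j+1) = ((vv : RatFunc ℚ) ^ (j+1))⁻¹ := by
    linear_combination h
  have hne : (vv : RatFunc ℚ) ^ (j+1) ≠ 0 := pow_ne_zero _ vv_ne
  have : (vv : RatFunc ℚ) ^ (j+1) * vv ^ (j+1) = 1 := by
    nth_rewrite 2 [hx]
    rw [mul_inv_cancel₀ hne]
  rw [← pow_add] at this
  exact vv_pow_ne_one (j + 1 + j) (by rw [show j+1+j+1 = j+1+(j+1) by omega]; exact this)

lemma bkp_succ (a : ℤ) (i : ℕ) : bkp a (i + 1) = bkp a i * bk (a - i) :=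
  Finset.prod_range_succ _ _

lemma bkp_succ' (a : ℤ) (i : ℕ) : bkp a (i + 1) = bkp (a - 1) i * bk a := by
  rw [bkp, Finset.prod_range_succ']
  congr 1
  · apply Finset.prod_congr rfl; intro j _; congr 1; push_cast; ring
  · simp [bk]

lemma bfact_succ (m : ℕ) : bfact (m + 1) = bfact m * bk ((m + 1 : ℕ) : ℤ) := by
  rw [bfact, show ((m+1:ℕ):ℤ) = ((m:ℤ)+1) by push_cast; ring, bkp_succ']
  simp [bfact]

lemma bfact_ne (n : ℕ) : bfact n ≠ 0 := by
  induction n with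
  | zero => simp [bfact, bkp]
  | succ m ih => rw [bfact_succ]; exact mul_ne_zero ih (bk_nat_ne m)

lemma core (b c b' c' : RatFunc ℚ) (hb : b * b' = 1) (hc : c * c' = 1) :
    b^2 * (c*b^2 - c'*b'^2) - (c*b)^4 * b^2 * (c - c')
      = (c*b) * (1 + (c*b)^2) * (b - b')
        - (c*b) * b * (1 + (c*b)^2) * ((c*b^2 - c'*b'^2) * (c - c')) := by
  linear_combination
    (-c' + c + c*c'^2 - c^2*c' - b*b'*c' + b*c*b'*c'^2 - b*c^2*b'*c' + b^2*c^3
      + b^2*c^3*c'^2 - b^2*c^4*c' + b^3*c^3*b'*c'^2 - b^3*c^4*b'*c') * hb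
    + (c' - c + b^2*c + b^2*c^2*c' - b^2*c^3 - b^4*c) * hc

noncomputable def TT (k n : ℕ) : RatFunc ℚ :=
  vv ^ (n * (n + 3) / 2) * (bkp ((k : ℤ) + n) (2 * n) / bfact n)

noncomputable def GG (k j : ℕ) : RatFunc ℚ :=
  vv ^ (k+1) * vv ^ (j*(j+1)/2) * (1 + vv ^ (2*k+2)) *
    (bkp ((k : ℤ) + j + 1) (2*j+1) / bfact j)

lemma TT_zero (k : ℕ) : TT k 0 = 1 := by
  simp [TT, bkp, bfact]

lemma TT_top (k : ℕ) : TT k (k+1) = 0 := by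
  have h : bkp ((k : ℤ) + ((k+1 : ℕ) : ℤ)) (2 * (k+1)) = 0 := by
    apply Finset.prod_eq_zero (i := 2*k+1)
    · simp [Finset.mem_range]; omega
    · have : ((k : ℤ) + ((k+1 : ℕ) : ℤ) - ((2*k+1 : ℕ) : ℤ)) = 0 := by push_cast; ring
      rw [this]; simp [bk]
  rw [TT, h]; simp

lemma GG_top (k : ℕ) : GG k (k+1) = 0 := by
  have h : bkp ((k : ℤ) + ((k+1 : ℕ) : ℤ) + 1) (2 * (k+1) + 1) = 0 := by
    apply Finset.prod_eq_zero (i := 2*k+2)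
    · simp [Finset.mem_range]; omega
    · have : ((k : ℤ) + ((k+1 : ℕ) : ℤ) + 1 - ((2*k+2 : ℕ) : ℤ)) = 0 := by push_cast; ring
      rw [this]; simp [bk]
  rw [GG, h]; simp

lemma GG_zero (k : ℕ) : GG k 0 = vv ^ (4*k+4) - 1 := by
  have hbkp : bkp ((k : ℤ) + ((0:ℕ):ℤ) + 1) (2*0+1) = vv ^ (k+1) - (vv ^ (k+1))⁻¹ := by
    rw [show (2*0+1 : ℕ) = 0 + 1 by norm_num, bkp_succ]
    rw [show bkp ((k:ℤ) + ((0:ℕ):ℤ) + 1) 0 = 1 by simp [bkp], one_mul]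
    rw [show ((k : ℤ) + ((0:ℕ):ℤ) + 1 - ((0:ℕ):ℤ)) = ((k+1:ℕ):ℤ) by push_cast; ring, bk_nat]
  have ha : (vv : RatFunc ℚ) ^ (k+1) * (vv ^ (k+1))⁻¹ = 1 :=
    mul_inv_cancel₀ (pow_ne_zero _ vv_ne)
  rw [GG, hbkp, bfact, show bkp ((0:ℕ):ℤ) 0 = 1 by simp [bkp],
    show (2*k+2 : ℕ) = (k+1)*2 by ring, show (4*k+4 : ℕ) = (k+1)*4 by ring,
    pow_mul, pow_mul]
  rw [div_one]
  linear_combination (-(1 + ((vv:RatFunc ℚ)^(k+1))^2)) * ha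

lemma step (k m : ℕ) (h : m ≤ k) :
    TT (k+1) (m+1) = vv ^ (4*k+4) * TT k (m+1) + (GG k m - GG k (m+1)) := by
  have hb : (vv : RatFunc ℚ) ^ (m+1) * ((vv : RatFunc ℚ) ^ (m+1))⁻¹ = 1 :=
    mul_inv_cancel₀ (pow_ne_zero _ vv_ne)
  have hc : (vv : RatFunc ℚ) ^ (k-m) * ((vv : RatFunc ℚ) ^ (k-m))⁻¹ = 1 :=
    mul_inv_cancel₀ (pow_ne_zero _ vv_ne)
  have hbk_top : bk ((k:ℤ) + (m:ℤ) + 2)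
      = vv^(k-m) * (vv^(m+1))^2 - (vv^(k-m))⁻¹ * ((vv^(m+1))⁻¹)^2 := by
    rw [show ((k:ℤ) + (m:ℤ) + 2) = ((k+m+2 : ℕ) : ℤ) by push_cast; ring, bk_nat]
    rw [show (vv : RatFunc ℚ)^(k+m+2) = vv^(k-m) * (vv^(m+1))^2 by
      rw [← pow_mul, ← pow_add]; congr 1; omega]
    rw [mul_inv, inv_pow]
  have hbk_mid : bk ((k:ℤ) - (m:ℤ)) = vv^(k-m) - (vv^(k-m))⁻¹ := by
    rw [show ((k:ℤ) - (m:ℤ)) = ((k-m : ℕ) : ℤ) by omega, bk_nat]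
  have hR1 : bkp ((↑(k+1) : ℤ) + (↑(m+1) : ℤ)) (2*(m+1))
      = bkp ((k:ℤ) + (m:ℤ) + 1) (2*m+1)
        * (vv^(k-m) * (vv^(m+1))^2 - (vv^(k-m))⁻¹ * ((vv^(m+1))⁻¹)^2) := by
    rw [show ((↑(k+1) : ℤ) + (↑(m+1) : ℤ)) = ((k:ℤ)+(m:ℤ)+1)+1 by push_cast; ring,
      show 2*(m+1) = (2*m+1)+1 by ring, bkp_succ',
      show ((k:ℤ)+(m:ℤ)+1+1-1) = (k:ℤ)+(m:ℤ)+1 by ring,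
      show ((k:ℤ)+(m:ℤ)+1+1) = (k:ℤ)+(m:ℤ)+2 by ring, hbk_top]
  have hR2 : bkp ((k : ℤ) + (↑(m+1) : ℤ)) (2*(m+1))
      = bkp ((k:ℤ) + (m:ℤ) + 1) (2*m+1) * (vv^(k-m) - (vv^(k-m))⁻¹) := by
    rw [show ((k:ℤ) + (↑(m+1) : ℤ)) = (k:ℤ)+(m:ℤ)+1 by push_cast; ring,
      show 2*(m+1) = (2*m+1)+1 by ring, bkp_succ]
    rw [show ((k:ℤ)+(m:ℤ)+1 - ((2*m+1 : ℕ) : ℤ)) = (k:ℤ) - (m:ℤ) by push_cast; ring, hbk_mid]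
  have hR3 : bkp ((k : ℤ) + (↑(m+1) : ℤ) + 1) (2*(m+1)+1)
      = bkp ((k:ℤ) + (m:ℤ) + 1) (2*m+1)
        * (vv^(k-m) * (vv^(m+1))^2 - (vv^(k-m))⁻¹ * ((vv^(m+1))⁻¹)^2)
        * (vv^(k-m) - (vv^(k-m))⁻¹) := by
    rw [bkp_succ,
      show ((k:ℤ) + (↑(m+1) : ℤ) + 1) = ((k:ℤ)+(m:ℤ)+1)+1 by push_cast; ring,
      show 2*(m+1) = (2*m+1)+1 by ring, bkp_succ',
      show ((k:ℤ)+(m:ℤ)+1+1-1) = (k:ℤ)+(m:ℤ)+1 by ring,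
      show ((k:ℤ)+(m:ℤ)+1+1) = (k:ℤ)+(m:ℤ)+2 by ring, hbk_top,
      show ((k:ℤ)+(m:ℤ)+2 - ((2*m+1+1 : ℕ) : ℤ)) = (k:ℤ) - (m:ℤ) by push_cast; ring, hbk_mid]
  have hbne : (vv : RatFunc ℚ)^(m+1) - ((vv : RatFunc ℚ)^(m+1))⁻¹ ≠ 0 := by
    have := bk_nat_ne m; rwa [bk_nat] at this
  have hdiv : bkp ((k:ℤ) + (m:ℤ) + 1) (2*m+1) / bfact m
      = bkp ((k:ℤ) + (m:ℤ) + 1) (2*m+1) * (vv^(m+1) - (vv^(m+1))⁻¹) / bfact (m+1) := by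
    rw [bfact_succ, bk_nat, mul_div_mul_right _ _ hbne]
  obtain ⟨t, ht⟩ : Even (m*(m+1)) := Nat.even_mul_succ_self m
  have e1 : (m+1) * (m+1+3) / 2 = m*(m+1)/2 + (m+1)*2 := by
    have h1 : (m+1)*(m+1+3) = m*(m+1) + (4*m+4) := by ring
    omega
  have e2 : (m+1) * (m+1+1) / 2 = m*(m+1)/2 + (m+1) := by
    have h1 : (m+1)*(m+1+1) = m*(m+1) + (2*m+2) := by ring
    omega
  have hP1 : (vv : RatFunc ℚ) ^ ((m+1) * (m+1+3) / 2) = vv^(m*(m+1)/2) * (vv^(m+1))^2 := by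
    rw [e1, pow_add, pow_mul]
  have hP2 : (vv : RatFunc ℚ) ^ ((m+1) * (m+1+1) / 2) = vv^(m*(m+1)/2) * vv^(m+1) := by
    rw [e2, pow_add]
  have hP3 : (vv : RatFunc ℚ) ^ (4*k+4) = (vv^(k-m) * vv^(m+1))^4 := by
    rw [← pow_add, ← pow_mul]; congr 1; omega
  have hP4 : (vv : RatFunc ℚ) ^ (2*k+2) = (vv^(k-m) * vv^(m+1))^2 := by
    rw [← pow_add, ← pow_mul]; congr 1; omega
  have hP5 : (vv : RatFunc ℚ) ^ (k+1) = vv^(k-m) * vv^(m+1) := by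
    rw [← pow_add]; congr 1; omega
  rw [TT, TT, GG, GG, hR1, hR2, hR3, hdiv, hP1, hP2, hP3, hP4, hP5]
  linear_combination (vv^(m*(m+1)/2) * bkp ((k:ℤ) + (m:ℤ) + 1) (2*m+1) / bfact (m+1))
    * core (vv^(m+1)) (vv^(k-m)) (vv^(m+1))⁻¹ (vv^(k-m))⁻¹ hb hc

lemma main (k : ℕ) : ∑ n ∈ Finset.range (k + 1), TT k n = vv ^ (2 * k * (k + 1)) := by
  induction k with
  | zero => simp [TT_zero]
  | succ k ih =>
    have hsum : ∑ n ∈ Finset.range (k + 1 + 1), TT (k+1) n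
        = (∑ j ∈ Finset.range (k + 1), TT (k+1) (j+1)) + TT (k+1) 0 :=
      Finset.sum_range_succ' _ _
    have hstep : ∑ j ∈ Finset.range (k + 1), TT (k+1) (j+1)
        = ∑ j ∈ Finset.range (k + 1),
            (vv ^ (4*k+4) * TT k (j+1) + (GG k j - GG k (j+1))) := by
      apply Finset.sum_congr rfl
      intro j hj
      exact step k j (by simp [Finset.mem_range] at hj; omega)
    have htel : ∑ j ∈ Finset.range (k + 1), (GG k j - GG k (j+1)) = GG k 0 - GG k (k+1) :=
      Finset.sum_range_sub' _ _
    have hTk : ∑ j ∈ Finset.range (k + 1), TT k (j+1) = vv ^ (2*k*(k+1)) - 1 := by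
      have h1 : ∑ n ∈ Finset.range (k + 1 + 1), TT k n
          = (∑ j ∈ Finset.range (k + 1), TT k (j+1)) + TT k 0 :=
        Finset.sum_range_succ' _ _
      have h2 : ∑ n ∈ Finset.range (k + 1 + 1), TT k n
          = (∑ n ∈ Finset.range (k + 1), TT k n) + TT k (k+1) :=
        Finset.sum_range_succ _ _
      rw [ih, TT_top, add_zero] at h2
      rw [h2, TT_zero] at h1
      linear_combination -h1
    rw [hsum, hstep, Finset.sum_add_distrib, ← Finset.mul_sum, htel, hTk, GG_zero, GG_top,
      TT_zero]
    rw [show 2*(k+1)*(k+1+1) = (4*k+4) + 2*k*(k+1) by ring, pow_add]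
    ring

theorem stmt9 (k : ℕ) :
    ∑ n ∈ Finset.range (k + 1),
        vv ^ (n * (n + 3) / 2) * (bkp ((k : ℤ) + n) (2 * n) / bfact n) =
      vv ^ (2 * k * (k + 1)) := by
  exact main k
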